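/- arXiv:1504.04820 — 4 statements merged into one kernel-verified Lean document; each statement's English description precedes it below -/
import Mathlib

section
/- In a finite connected graph, if a vertex u is maximally distant from a vertex v but v is not maximally distant from u, then there exists a vertex v' such that u and v' are mutually maximally distant. Consequently, the boundary of G (the set of vertices maximally distant from some vertex) equals the set of vertices that are mutually maximally distant from some vertex. -/
open SimpleGraph

variable {V : Type*}

/-- `w` strongly resolves `u` and `v` in `G`. -/
def StronglyResolves (G : SimpleGraph V) (w u v : V) : Prop :=
  G.dist u w = G.dist u v + G.dist v w ∨ G.dist v w = G.dist v u + G.dist u w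

/-- `S` is a strong metric generator for `G`. -/
def IsStrongMetricGen (G : SimpleGraph V) (S : Set V) : Prop :=
  ∀ u v : V, u ≠ v → ∃ w ∈ S, StronglyResolves G w u v

/-- The simultaneous strong metric dimension of a family of graphs. -/
noncomputable def SdS (𝒢 : Set (SimpleGraph V)) : ℕ :=
  sInf {n | ∃ S : Set V, S.ncard = n ∧ ∀ G ∈ 𝒢, IsStrongMetricGen G S}

/-- The strong metric dimension of a single graph. -/
noncomputable def sdim (G : SimpleGraph V) : ℕ := SdS {G}

/-- `u` is maximally distant from `v` in `G`. -/
def MaxDistantFrom (G : SimpleGraph V) (u v : V) : Prop :=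
  ∀ w : V, G.Adj u w → G.dist v w ≤ G.dist v u

/-- `u` and `v` are mutually maximally distant in `G`. -/
def MutuallyMaxDistant (G : SimpleGraph V) (u v : V) : Prop :=
  MaxDistantFrom G u v ∧ MaxDistantFrom G v u

/-- The strong resolving graph of `G`. -/
def SRG (G : SimpleGraph V) : SimpleGraph V where
  Adj u v := u ≠ v ∧ MutuallyMaxDistant G u v
  symm := by
    constructor
    intro u v h
    exact ⟨h.1.symm, h.2.2, h.2.1⟩
  loopless := by constructor; intro u h; exact h.1 rfl

/-- The boundary of `G`: vertices mutually maximally distant from some vertex. -/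
def Boundary (G : SimpleGraph V) : Set V :=
  {u | ∃ v, MutuallyMaxDistant G u v}

/-- `S` is a vertex cover of `G`. -/
def IsVertexCover (G : SimpleGraph V) (S : Set V) : Prop :=
  ∀ u v : V, G.Adj u v → u ∈ S ∨ v ∈ S

/-- The vertex cover number. -/
noncomputable def vcNum (G : SimpleGraph V) : ℕ :=
  sInf {n | ∃ S : Set V, S.ncard = n ∧ _root_.IsVertexCover G S}

/-- A strong resolving cover: simultaneously a vertex cover and a strong metric generator. -/
def IsStrongResCover (G : SimpleGraph V) (S : Set V) : Prop :=
  _root_.IsVertexCover G S ∧ IsStrongMetricGen G S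

/-- The strong resolving cover number `β_s`. -/
noncomputable def betaS (G : SimpleGraph V) : ℕ :=
  sInf {n | ∃ S : Set V, S.ncard = n ∧ IsStrongResCover G S}

/-- `G` is 2-antipodal. -/
def TwoAntipodal (G : SimpleGraph V) : Prop :=
  ∀ x : V, ∃! y : V, G.dist x y = G.diam

/-- `v` is a leaf of `G` (degree one). -/
def IsLeaf (G : SimpleGraph V) (v : V) : Prop := ∃! w : V, G.Adj v w

/- Among the vertices `w` from which `u` is maximally distant, take one farthest from `u`. If a
neighbour `z` of `w` were farther from `u` than `w`, then `u` would also be maximally distant from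
`z` (it costs one step to pass from `z` to `w`), contradicting the choice of `w`. So `w` is
maximally distant from `u` as well. -/

theorem MaxDistantFrom.of_adj_of_dist_lt {G : SimpleGraph V} {u w z : V}
    (hw : MaxDistantFrom G u w) (hwz : G.Adj w z) (hlt : G.dist u w < G.dist u z) :
    MaxDistantFrom G u z := by
  intro t ht
  have hzw : G.dist z w = 1 := dist_eq_one_iff_adj.mpr hwz.symm
  calc G.dist z t ≤ G.dist z w + G.dist w t := hwz.symm.reachable.dist_triangle_left t
    _ ≤ 1 + G.dist w u := by rw [hzw]; exact Nat.add_le_add_left (hw t ht) 1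
    _ ≤ G.dist z u := by rw [dist_comm (u := w), dist_comm (u := z)]; omega

theorem MaxDistantFrom.exists_mutuallyMaxDistant [Finite V] {G : SimpleGraph V} {u v : V}
    (h : MaxDistantFrom G u v) : ∃ v', MutuallyMaxDistant G u v' := by
  obtain ⟨w, hw, hfarthest⟩ := Set.exists_max_image {w | MaxDistantFrom G u w} (G.dist u)
    (Set.toFinite _) ⟨v, h⟩
  refine ⟨w, hw, fun z hwz => ?_⟩
  by_contra! hlt
  exact (hfarthest z (hw.of_adj_of_dist_lt hwz hlt)).not_gt hlt

theorem stmt2_general [Fintype V] (G : SimpleGraph V) :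
    (∀ u v : V, MaxDistantFrom G u v → ¬ MaxDistantFrom G v u →
      ∃ v' : V, MutuallyMaxDistant G u v') ∧
    {u : V | ∃ v, MaxDistantFrom G u v} = {u : V | ∃ v, MutuallyMaxDistant G u v} := by
  refine ⟨fun u v h _ => h.exists_mutuallyMaxDistant, ?_⟩
  ext u
  exact ⟨fun ⟨_, h⟩ => h.exists_mutuallyMaxDistant, fun ⟨v, h⟩ => ⟨v, h.1⟩⟩

theorem stmt2 [Fintype V] (G : SimpleGraph V) (hG : G.Connected) :
    (∀ u v : V, MaxDistantFrom G u v → ¬ MaxDistantFrom G v u →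
      ∃ v' : V, MutuallyMaxDistant G u v') ∧
    {u : V | ∃ v, MaxDistantFrom G u v} = {u : V | ∃ v, MutuallyMaxDistant G u v} :=
  stmt2_general G
end

section
/- For any family 𝒢 = {G_1,…,G_k} of connected graphs on a common vertex set, the maximum of the individual strong metric dimensions is at most Sd_s(𝒢), and Sd_s(𝒢) is at most the minimum of (|∂(𝒢)|−1) and the sum of the individual strong metric dimensions, where ∂(𝒢) is the union of the boundaries of the graphs in 𝒢. -/
open SimpleGraph

variable {V : Type*}

/-! For `u ≠ v` in a finite connected graph, among the vertices `w` with `v` on a `u`–`w` geodesic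
take one farthest from `u`: it is maximally distant from `u`, hence lies in the boundary, and it
strongly resolves `u, v`. Doing the same with `u` and `v` swapped gives a second, different, such
vertex, so the boundary with any single vertex removed still strongly resolves every graph of the
family. The other two bounds hold because `SdS` is monotone in the family and the union of optimal
generators of the members is a simultaneous generator. -/

lemma isStrongMetricGen_univ (G : SimpleGraph V) : IsStrongMetricGen G Set.univ :=
  fun _ v _ => ⟨v, Set.mem_univ v, Or.inl (by simp)⟩

lemma IsStrongMetricGen.mono {G : SimpleGraph V} {S T : Set V} (hST : S ⊆ T)
    (hS : IsStrongMetricGen G S) : IsStrongMetricGen G T :=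
  fun u v huv => (hS u v huv).imp fun _ hw => ⟨hST hw.1, hw.2⟩

lemma SdS_le_ncard {𝒢 : Set (SimpleGraph V)} {S : Set V}
    (hS : ∀ G ∈ 𝒢, IsStrongMetricGen G S) : SdS 𝒢 ≤ S.ncard :=
  Nat.sInf_le ⟨S, rfl, hS⟩

lemma exists_ncard_eq_SdS (𝒢 : Set (SimpleGraph V)) :
    ∃ S : Set V, S.ncard = SdS 𝒢 ∧ ∀ G ∈ 𝒢, IsStrongMetricGen G S := by
  have hne : {n | ∃ S : Set V, S.ncard = n ∧ ∀ G ∈ 𝒢, IsStrongMetricGen G S}.Nonempty :=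
    ⟨_, Set.univ, rfl, fun G _ => isStrongMetricGen_univ G⟩
  exact Nat.sInf_mem hne

lemma exists_ncard_eq_sdim (G : SimpleGraph V) :
    ∃ S : Set V, S.ncard = sdim G ∧ IsStrongMetricGen G S :=
  (exists_ncard_eq_SdS {G}).imp fun _ hS => ⟨hS.1, hS.2 G rfl⟩

lemma SdS_mono {𝒢 ℋ : Set (SimpleGraph V)} (h : 𝒢 ⊆ ℋ) : SdS 𝒢 ≤ SdS ℋ := by
  obtain ⟨S, hcard, hS⟩ := exists_ncard_eq_SdS ℋ
  exact hcard ▸ SdS_le_ncard fun G hG => hS G (h hG)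

lemma sdim_le_SdS {𝒢 : Set (SimpleGraph V)} {G : SimpleGraph V} (hG : G ∈ 𝒢) :
    sdim G ≤ SdS 𝒢 :=
  SdS_mono (Set.singleton_subset_iff.2 hG)

lemma SdS_le_sum_sdim (𝒢 : Finset (SimpleGraph V)) :
    SdS (𝒢 : Set (SimpleGraph V)) ≤ ∑ G ∈ 𝒢, sdim G := by
  choose S hcard hS using exists_ncard_eq_sdim (V := V)
  calc SdS (𝒢 : Set (SimpleGraph V))
      ≤ (⋃ G ∈ 𝒢, S G).ncard :=
        SdS_le_ncard fun G hG => (hS G).mono (Set.subset_biUnion_of_mem (u := S) hG)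
    _ ≤ ∑ G ∈ 𝒢, (S G).ncard := 𝒢.set_ncard_biUnion_le S
    _ = ∑ G ∈ 𝒢, sdim G := by simp only [hcard]

lemma SdS_le_ncard_sub_one {𝒢 : Set (SimpleGraph V)} {B : Set V}
    (hB : ∀ G ∈ 𝒢, ∀ u v, u ≠ v → ∃ w₁ ∈ B, ∃ w₂ ∈ B, w₁ ≠ w₂ ∧
      StronglyResolves G w₁ u v ∧ StronglyResolves G w₂ u v) :
    SdS 𝒢 ≤ B.ncard - 1 := by
  rcases B.eq_empty_or_nonempty with rfl | ⟨x, hx⟩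
  · refine (SdS_le_ncard (S := ∅) fun G hG u v huv => ?_).trans_eq (by simp)
    obtain ⟨w, hw, -⟩ := hB G hG u v huv
    exact hw.elim
  · rw [← Set.ncard_sdiff_singleton_of_mem hx]
    refine SdS_le_ncard fun G hG u v huv => ?_
    obtain ⟨w₁, hw₁, w₂, hw₂, hne, h₁, h₂⟩ := hB G hG u v huv
    by_cases hx₁ : w₁ = x
    · exact ⟨w₂, ⟨hw₂, fun h => hne (hx₁.trans h.symm)⟩, h₂⟩
    · exact ⟨w₁, ⟨hw₁, hx₁⟩, h₁⟩

namespace SimpleGraph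

variable {G : SimpleGraph V}

lemma Adj.dist_le_add_one {v w : V} (h : G.Adj v w) (u : V) : G.dist u w ≤ G.dist u v + 1 :=
  dist_eq_one_iff_adj.2 h ▸ h.reachable.dist_triangle_right u

lemma Connected.exists_maxDistantFrom_dist_eq_add [Finite V] (hG : G.Connected) (u v : V) :
    ∃ w, MaxDistantFrom G w u ∧ G.dist u w = G.dist u v + G.dist v w := by
  obtain ⟨w, hw : G.dist u w = G.dist u v + G.dist v w, hmax⟩ :=
    Set.exists_max_image {z | G.dist u z = G.dist u v + G.dist v z} (G.dist u) (Set.toFinite _)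
      ⟨v, by simp⟩
  refine ⟨w, fun z hwz => ?_, hw⟩
  by_contra! hlt
  -- a neighbour of `w` farther from `u` would still have `v` on a geodesic from `u`
  have hz : G.dist u z = G.dist u v + G.dist v z := by
    have := hwz.dist_le_add_one u
    have := hwz.dist_le_add_one v
    have : G.dist u z ≤ G.dist u v + G.dist v z := hG.dist_triangle
    omega
  exact (hmax z hz).not_gt hlt

lemma Connected.mem_boundary_of_maxDistantFrom [Finite V] (hG : G.Connected) {w u : V}
    (h : MaxDistantFrom G w u) : w ∈ Boundary G := by
  obtain ⟨u', hu', hgeod⟩ := hG.exists_maxDistantFrom_dist_eq_add w u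
  refine ⟨u', fun z hwz => ?_, hu'⟩
  calc G.dist u' z ≤ G.dist u' u + G.dist u z := hG.dist_triangle
    _ ≤ G.dist u' u + G.dist u w := Nat.add_le_add_left (h z hwz) _
    _ = G.dist u' w := by
      rw [dist_comm (u := u') (v := w), hgeod, dist_comm (u := w), dist_comm (u := u'), add_comm]

lemma Connected.exists_mem_boundary_stronglyResolves [Finite V] (hG : G.Connected)
    {u v : V} (huv : u ≠ v) :
    ∃ w₁ ∈ Boundary G, ∃ w₂ ∈ Boundary G, w₁ ≠ w₂ ∧
      StronglyResolves G w₁ u v ∧ StronglyResolves G w₂ u v := by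
  obtain ⟨w₁, h₁, hd₁⟩ := hG.exists_maxDistantFrom_dist_eq_add u v
  obtain ⟨w₂, h₂, hd₂⟩ := hG.exists_maxDistantFrom_dist_eq_add v u
  refine ⟨w₁, hG.mem_boundary_of_maxDistantFrom h₁, w₂, hG.mem_boundary_of_maxDistantFrom h₂,
    ?_, Or.inl hd₁, Or.inr hd₂⟩
  rintro rfl
  have := hG.pos_dist_of_ne huv
  rw [dist_comm (u := v) (v := u)] at hd₂
  omega

end SimpleGraph

theorem stmt7 [Fintype V] (𝒢 : Finset (SimpleGraph V)) (hconn : ∀ G ∈ 𝒢, G.Connected) :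
    (∀ G ∈ 𝒢, sdim G ≤ SdS (𝒢 : Set (SimpleGraph V))) ∧
    SdS (𝒢 : Set (SimpleGraph V)) ≤
      min ((⋃ G ∈ 𝒢, Boundary G).ncard - 1) (∑ G ∈ 𝒢, sdim G) := by
  refine ⟨fun G hG => sdim_le_SdS (Finset.mem_coe.2 hG), le_min ?_ (SdS_le_sum_sdim 𝒢)⟩
  refine SdS_le_ncard_sub_one fun G hG u v huv => ?_
  obtain ⟨w₁, hw₁, w₂, hw₂, h⟩ := (hconn G hG).exists_mem_boundary_stronglyResolves huv
  exact ⟨w₁, Set.mem_biUnion hG hw₁, w₂, Set.mem_biUnion hG hw₂, h⟩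
end

section
/- Let 𝒢 be a family of connected graphs of order n ≥ 2 on a common vertex set. Then Sd_s(𝒢) ≤ n − Sϖ(𝒢), where Sϖ(𝒢) is the simultaneous twin-free clique number. Moreover, if every graph in 𝒢 has diameter two, then Sd_s(𝒢) = n − Sϖ(𝒢). -/
/-!
If `X` is a twin-free clique, every pair with a vertex outside `X` is resolved by that vertex,
and two vertices `u, v ∈ X` are resolved by a vertex `w` in the symmetric difference of their
closed neighbourhoods: `w` lies outside `X` and at distance `2` from one of them through the
other. Hence `Xᶜ` is a strong metric generator. Conversely, when all distances are at most `2`,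
a vertex `w` strongly resolving `u, v` forces the distances `1, 1, 2` along a path `u, v, w`
(or `v, u, w`), so the complement of a strong metric generator is a twin-free clique.
-/

open SimpleGraph

variable {V : Type*}

/-- `X` is a twin-free clique in `G`. -/
def IsTwinFreeClique (G : SimpleGraph V) (X : Set V) : Prop :=
  G.IsClique X ∧
    X.Pairwise (fun x y => insert x (G.neighborSet x) ≠ insert y (G.neighborSet y))

/-- The simultaneous twin-free clique number of a family. -/
noncomputable def SimTwinFreeCliqueNum (𝒢 : Set (SimpleGraph V)) : ℕ :=
  sSup {n | ∃ X : Set V, X.ncard = n ∧ ∀ G ∈ 𝒢, IsTwinFreeClique G X}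

variable {G : SimpleGraph V} {u v w : V}

lemma stronglyResolves_comm : StronglyResolves G w u v ↔ StronglyResolves G w v u :=
  Or.comm

lemma stronglyResolves_self_left : StronglyResolves G u u v :=
  Or.inr (by rw [SimpleGraph.dist_self, add_zero])

lemma stronglyResolves_self_right : StronglyResolves G v u v :=
  Or.inl (by rw [SimpleGraph.dist_self, add_zero])

lemma dist_eq_two_of_adj_of_adj (hvu : G.Adj v u) (huw : G.Adj u w) (hvw : v ≠ w)
    (hnadj : ¬ G.Adj v w) : G.dist v w = 2 := by
  have hedist : G.edist v w = 2 := edist_eq_two_iff.2 ⟨hvw, hnadj, u, hvu, huw.symm⟩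
  rw [SimpleGraph.dist, hedist]
  rfl

lemma stronglyResolves_of_adj_of_adj (hvu : G.Adj v u) (huw : G.Adj u w) (hvw : v ≠ w)
    (hnadj : ¬ G.Adj v w) : StronglyResolves G w u v := by
  right
  rw [dist_eq_two_of_adj_of_adj hvu huw hvw hnadj, dist_eq_one_iff_adj.2 hvu,
    dist_eq_one_iff_adj.2 huw]

lemma notMem_and_stronglyResolves_of_isClique {X : Set V} (hX : G.IsClique X) (hu : u ∈ X)
    (hv : v ∈ X) (huv : u ≠ v) (hwu : w ∈ insert u (G.neighborSet u))
    (hwv : w ∉ insert v (G.neighborSet v)) : w ∉ X ∧ StronglyResolves G w u v := by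
  simp only [Set.mem_insert_iff, mem_neighborSet, not_or] at hwu hwv
  obtain ⟨hwv, hnadj⟩ := hwv
  have hvu : G.Adj v u := hX hv hu huv.symm
  have huw : G.Adj u w := hwu.resolve_left (by rintro rfl; exact hnadj hvu)
  exact ⟨fun hw => hnadj (hX hv hw (Ne.symm hwv)),
    stronglyResolves_of_adj_of_adj hvu huw (Ne.symm hwv) hnadj⟩

lemma isStrongMetricGen_compl {X : Set V} (hX : IsTwinFreeClique G X) :
    IsStrongMetricGen G Xᶜ := by
  intro u v huv
  by_cases hu : u ∈ X
  swap
  · exact ⟨u, hu, stronglyResolves_self_left⟩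
  by_cases hv : v ∈ X
  swap
  · exact ⟨v, hv, stronglyResolves_self_right⟩
  obtain ⟨w, hw⟩ := not_forall.1 (mt Set.ext (hX.2 hu hv huv))
  by_cases hwu : w ∈ insert u (G.neighborSet u)
  · have hwv : w ∉ insert v (G.neighborSet v) := fun h => hw ⟨fun _ => h, fun _ => hwu⟩
    exact ⟨w, notMem_and_stronglyResolves_of_isClique hX.1 hu hv huv hwu hwv⟩
  · have hwv : w ∈ insert v (G.neighborSet v) := by_contra fun h => hw (iff_of_false hwu h)
    obtain ⟨hwX, hres⟩ :=
      notMem_and_stronglyResolves_of_isClique hX.1 hv hu (Ne.symm huv) hwv hwu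
    exact ⟨w, hwX, stronglyResolves_comm.1 hres⟩

lemma adj_of_dist_eq_add_of_dist_le_two (hG : G.Preconnected) (huv : u ≠ v) (hvw : v ≠ w)
    (h2 : G.dist u w ≤ 2) (h : G.dist u w = G.dist u v + G.dist v w) :
    G.Adj u v ∧ G.Adj v w ∧ ¬ G.Adj u w := by
  have h₁ := (hG u v).pos_dist_of_ne huv
  have h₂ := (hG v w).pos_dist_of_ne hvw
  refine ⟨dist_eq_one_iff_adj.1 (by omega), dist_eq_one_iff_adj.1 (by omega), fun huw => ?_⟩
  rw [dist_eq_one_iff_adj.2 huw] at h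
  omega

lemma insert_neighborSet_ne (hvw : G.Adj v w) (huw : u ≠ w) (hnadj : ¬ G.Adj u w) :
    insert u (G.neighborSet u) ≠ insert v (G.neighborSet v) := by
  intro h
  have hw : w ∈ insert u (G.neighborSet u) := h ▸ Set.mem_insert_of_mem v hvw
  rcases hw with rfl | huw'
  · exact huw rfl
  · exact hnadj huw'

lemma adj_and_insert_neighborSet_ne_of_stronglyResolves (hG : G.Preconnected)
    (hbd : ∀ a b : V, G.dist a b ≤ 2) (huv : u ≠ v) (hwu : w ≠ u) (hwv : w ≠ v)
    (h : StronglyResolves G w u v) :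
    G.Adj u v ∧ insert u (G.neighborSet u) ≠ insert v (G.neighborSet v) := by
  rcases h with h | h
  · obtain ⟨hadj, hvw, hnadj⟩ :=
      adj_of_dist_eq_add_of_dist_le_two hG huv (Ne.symm hwv) (hbd u w) h
    exact ⟨hadj, insert_neighborSet_ne hvw (Ne.symm hwu) hnadj⟩
  · obtain ⟨hadj, huw, hnadj⟩ :=
      adj_of_dist_eq_add_of_dist_le_two hG (Ne.symm huv) (Ne.symm hwu) (hbd v w) h
    exact ⟨hadj.symm, (insert_neighborSet_ne huw (Ne.symm hwv) hnadj).symm⟩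

lemma isTwinFreeClique_compl_of_diam_eq_two (hd : G.diam = 2) {S : Set V}
    (hS : IsStrongMetricGen G S) : IsTwinFreeClique G Sᶜ := by
  have hediam : G.ediam ≠ ⊤ := ediam_ne_top_of_diam_ne_zero (by omega)
  have hbd : ∀ a b : V, G.dist a b ≤ 2 := fun a b => hd ▸ dist_le_diam hediam
  have key : ∀ u ∈ Sᶜ, ∀ v ∈ Sᶜ, u ≠ v →
      G.Adj u v ∧ insert u (G.neighborSet u) ≠ insert v (G.neighborSet v) := by
    intro u hu v hv huv
    obtain ⟨w, hwS, hres⟩ := hS u v huv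
    exact adj_and_insert_neighborSet_ne_of_stronglyResolves
      (preconnected_of_ediam_ne_top hediam) hbd huv
      (fun h => hu (h ▸ hwS)) (fun h => hv (h ▸ hwS)) hres
  exact ⟨fun u hu v hv huv => (key u hu v hv huv).1, fun u hu v hv huv => (key u hu v hv huv).2⟩

section Extremal

variable (𝒢 : Set (SimpleGraph V))

lemma exists_isStrongMetricGen_ncard_eq_sdS :
    ∃ S : Set V, S.ncard = SdS 𝒢 ∧ ∀ G ∈ 𝒢, IsStrongMetricGen G S :=
  Nat.sInf_mem (s := {n | ∃ S : Set V, S.ncard = n ∧ ∀ G ∈ 𝒢, IsStrongMetricGen G S})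
    ⟨_, Set.univ, rfl, fun _ _ u _ _ => ⟨u, trivial, stronglyResolves_self_left⟩⟩

variable {𝒢}

lemma sdS_le_ncard {S : Set V} (hS : ∀ G ∈ 𝒢, IsStrongMetricGen G S) : SdS 𝒢 ≤ S.ncard :=
  Nat.sInf_le ⟨S, rfl, hS⟩

variable [Finite V]

lemma bddAbove_twinFreeClique_ncard :
    BddAbove {n | ∃ X : Set V, X.ncard = n ∧ ∀ G ∈ 𝒢, IsTwinFreeClique G X} :=
  ⟨Nat.card V, fun _ ⟨X, hX, _⟩ => hX ▸ Set.ncard_le_card X⟩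

variable (𝒢)

lemma exists_isTwinFreeClique_ncard_eq_simTwinFreeCliqueNum :
    ∃ X : Set V, X.ncard = SimTwinFreeCliqueNum 𝒢 ∧ ∀ G ∈ 𝒢, IsTwinFreeClique G X :=
  Nat.sSup_mem (s := {n | ∃ X : Set V, X.ncard = n ∧ ∀ G ∈ 𝒢, IsTwinFreeClique G X})
    ⟨0, ∅, Set.ncard_empty V, fun _ _ => ⟨Set.pairwise_empty _, Set.pairwise_empty _⟩⟩
    bddAbove_twinFreeClique_ncard

variable {𝒢}

lemma ncard_le_simTwinFreeCliqueNum {X : Set V} (hX : ∀ G ∈ 𝒢, IsTwinFreeClique G X) :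
    X.ncard ≤ SimTwinFreeCliqueNum 𝒢 :=
  le_csSup bddAbove_twinFreeClique_ncard ⟨X, rfl, hX⟩

end Extremal

theorem stmt8_general [Fintype V] (𝒢 : Set (SimpleGraph V)) :
    SdS 𝒢 ≤ Fintype.card V - SimTwinFreeCliqueNum 𝒢 ∧
    ((∀ G ∈ 𝒢, G.diam = 2) → SdS 𝒢 = Fintype.card V - SimTwinFreeCliqueNum 𝒢) := by
  rw [← Nat.card_eq_fintype_card]
  obtain ⟨X, hXcard, hX⟩ := exists_isTwinFreeClique_ncard_eq_simTwinFreeCliqueNum 𝒢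
  have hupper : SdS 𝒢 ≤ Nat.card V - SimTwinFreeCliqueNum 𝒢 :=
    calc SdS 𝒢 ≤ Xᶜ.ncard := sdS_le_ncard fun G hG => isStrongMetricGen_compl (hX G hG)
      _ = Nat.card V - SimTwinFreeCliqueNum 𝒢 := by rw [Set.ncard_compl, hXcard]
  refine ⟨hupper, fun hd => le_antisymm hupper ?_⟩
  obtain ⟨S, hScard, hS⟩ := exists_isStrongMetricGen_ncard_eq_sdS 𝒢
  have hlower : Nat.card V - SdS 𝒢 ≤ SimTwinFreeCliqueNum 𝒢 := by
    rw [← hScard, ← Set.ncard_compl]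
    exact ncard_le_simTwinFreeCliqueNum fun G hG =>
      isTwinFreeClique_compl_of_diam_eq_two (hd G hG) (hS G hG)
  have hle : SdS 𝒢 ≤ Nat.card V := hScard ▸ Set.ncard_le_card S
  omega

theorem stmt8 [Fintype V] (𝒢 : Set (SimpleGraph V)) (hn : 2 ≤ Fintype.card V)
    (hconn : ∀ G ∈ 𝒢, G.Connected) :
    SdS 𝒢 ≤ Fintype.card V - SimTwinFreeCliqueNum 𝒢 ∧
    ((∀ G ∈ 𝒢, G.diam = 2) → SdS 𝒢 = Fintype.card V - SimTwinFreeCliqueNum 𝒢) :=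
  stmt8_general 𝒢
end

section
/- If G is a connected graph whose complement G^c is connected, then any strong resolving cover of G (a set that is simultaneously a vertex cover and a strong metric generator of G) is a simultaneous strong metric generator for the family {G, G^c}. Consequently, Sd_s(G,G^c) ≤ min{β_s(G), β_s(G^c)}, where β_s denotes the minimum size of a strong resolving cover. -/
open SimpleGraph

variable {V : Type*}

/-!
Let `S` be a strong resolving cover of the connected graph `G` and let `u ≠ v` lie outside `S`
(a pair meeting `S` is resolved by its own vertex in `S`). As `S` covers the edges of `G`,
`u v` is an edge of `Gᶜ`. Some `w ∈ S` sees `v` on a geodesic of `G` from `u` to `w`; the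
successor `y` of `v` on that geodesic is in `S`, because `v y` is an edge of `G` and `v ∉ S`,
and `d(u, y) = d(u, v) + 1 ≥ 2`. Hence `v – u – y` is an induced path of `Gᶜ`, so
`y` strongly resolves `u, v` in `Gᶜ`. Applying this to `Gᶜ` as well (`Gᶜᶜ = G`) gives the bound.
-/

lemma StronglyResolves.symm {G : SimpleGraph V} {w u v : V} (h : StronglyResolves G w u v) :
    StronglyResolves G w v u :=
  Or.symm h

lemma stronglyResolves_left (G : SimpleGraph V) (u v : V) : StronglyResolves G u u v :=
  Or.inr (by simp)

lemma stronglyResolves_right (G : SimpleGraph V) (u v : V) : StronglyResolves G v u v :=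
  Or.inl (by simp)

lemma isStrongResCover_univ (G : SimpleGraph V) : IsStrongResCover G Set.univ :=
  ⟨fun _ _ _ => Or.inl trivial, fun u v _ => ⟨v, trivial, stronglyResolves_right G u v⟩⟩

lemma stronglyResolves_of_adj_of_adj_s12 {G : SimpleGraph V} {u v y : V} (huv : G.Adj u v)
    (huy : G.Adj u y) (hvy : v ≠ y) (hnvy : ¬G.Adj v y) : StronglyResolves G y u v := by
  let p : G.Walk v y := .cons huv.symm (.cons huy .nil)
  have hvy_dist : G.dist v y = 2 :=
    le_antisymm (dist_le p) (p.reachable.one_lt_dist_of_ne_of_not_adj hvy hnvy)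
  right
  rw [hvy_dist, dist_eq_one_iff_adj.mpr huv.symm, dist_eq_one_iff_adj.mpr huy]

lemma exists_adj_dist_eq_add_one_of_dist_eq_add {G : SimpleGraph V} {u v w : V}
    (hvw : G.dist v w ≠ 0) (h : G.dist u w = G.dist u v + G.dist v w) :
    ∃ y, G.Adj v y ∧ G.dist u y = G.dist u v + 1 := by
  obtain ⟨p, hp⟩ := exists_walk_of_dist_ne_zero hvw
  cases p with
  | nil => simp at hvw
  | @cons _ y _ hadj q =>
    refine ⟨y, hadj, ?_⟩
    have hq : q.length + 1 = G.dist v w := by simpa using hp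
    have hyw : G.dist y w ≤ q.length := dist_le q
    have hfar : G.dist u w ≤ G.dist u y + G.dist y w := q.reachable.dist_triangle_right u
    have hnear : G.dist u y ≤ G.dist u v + G.dist v y := hadj.reachable.dist_triangle_right u
    rw [dist_eq_one_iff_adj.mpr hadj] at hnear
    omega

lemma IsVertexCover.exists_stronglyResolves_compl {G : SimpleGraph V} (hG : G.Connected)
    {S : Set V} (hS : _root_.IsVertexCover G S) {u v w : V} (hu : u ∉ S) (hv : v ∉ S)
    (huv : u ≠ v) (hw : w ∈ S) (h : G.dist u w = G.dist u v + G.dist v w) :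
    ∃ y ∈ S, StronglyResolves Gᶜ y u v := by
  have hvw : G.dist v w ≠ 0 := fun h0 => hv (hG.dist_eq_zero_iff.mp h0 ▸ hw)
  obtain ⟨y, hvy, huy⟩ := exists_adj_dist_eq_add_one_of_dist_eq_add hvw h
  have huv_pos : 0 < G.dist u v := hG.pos_dist_of_ne huv
  have hu_ne_y : u ≠ y := by rintro rfl; simp at huy
  have hnuy : ¬G.Adj u y := fun hadj => by rw [dist_eq_one_iff_adj.mpr hadj] at huy; omega
  have hnuv : ¬G.Adj u v := fun hadj => (hS u v hadj).elim hu hv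
  refine ⟨y, (hS v y hvy).resolve_left hv, ?_⟩
  exact stronglyResolves_of_adj_of_adj_s12 ⟨huv, hnuv⟩ ⟨hu_ne_y, hnuy⟩ hvy.ne (fun h => h.2 hvy)

lemma IsStrongResCover.isStrongMetricGen_compl {G : SimpleGraph V} (hG : G.Connected)
    {S : Set V} (hS : IsStrongResCover G S) : IsStrongMetricGen Gᶜ S := by
  intro u v huv
  by_cases hu : u ∈ S
  · exact ⟨u, hu, stronglyResolves_left _ _ _⟩
  by_cases hv : v ∈ S
  · exact ⟨v, hv, stronglyResolves_right _ _ _⟩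
  obtain ⟨w, hw, hres | hres⟩ := hS.2 u v huv
  · exact hS.1.exists_stronglyResolves_compl hG hu hv huv hw hres
  · obtain ⟨y, hy, hyres⟩ := hS.1.exists_stronglyResolves_compl hG hv hu huv.symm hw hres
    exact ⟨y, hy, hyres.symm⟩

lemma IsStrongResCover.isStrongMetricGen_of_mem_pair {G : SimpleGraph V} (hG : G.Connected)
    {S : Set V} (hS : IsStrongResCover G S) :
    ∀ H ∈ ({G, Gᶜ} : Set (SimpleGraph V)), IsStrongMetricGen H S := by
  rintro H (rfl | rfl)
  · exact hS.2
  · exact hS.isStrongMetricGen_compl hG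

lemma sdS_le_betaS {𝒢 : Set (SimpleGraph V)} {G : SimpleGraph V}
    (h : ∀ S, IsStrongResCover G S → ∀ H ∈ 𝒢, IsStrongMetricGen H S) : SdS 𝒢 ≤ betaS G := by
  obtain ⟨S, hcard, hS⟩ :=
    Nat.sInf_mem (s := {n | ∃ S : Set V, S.ncard = n ∧ IsStrongResCover G S})
      ⟨_, Set.univ, rfl, isStrongResCover_univ G⟩
  exact Nat.sInf_le ⟨S, hcard, h S hS⟩

theorem stmt12_general (G : SimpleGraph V) (hG : G.Connected) (hGc : Gᶜ.Connected) :
    (∀ S : Set V, IsStrongResCover G S →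
      (IsStrongMetricGen G S ∧ IsStrongMetricGen Gᶜ S)) ∧
    SdS {G, Gᶜ} ≤ min (betaS G) (betaS Gᶜ) := by
  refine ⟨fun S hS => ⟨hS.2, hS.isStrongMetricGen_compl hG⟩,
    le_min (sdS_le_betaS fun S hS => hS.isStrongMetricGen_of_mem_pair hG)
      (sdS_le_betaS fun S hS => ?_)⟩
  simpa only [compl_compl, Set.pair_comm] using hS.isStrongMetricGen_of_mem_pair hGc

theorem stmt12 [Fintype V] (G : SimpleGraph V) (hG : G.Connected) (hGc : Gᶜ.Connected) :
    (∀ S : Set V, IsStrongResCover G S →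
      (IsStrongMetricGen G S ∧ IsStrongMetricGen Gᶜ S)) ∧
    SdS {G, Gᶜ} ≤ min (betaS G) (betaS Gᶜ) :=
  stmt12_general G hG hGc
end
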